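/- arXiv:2604.27380 — 2 statements merged into one kernel-verified Lean document; each statement's English description precedes it below -/
import Mathlib

section
/- Let 𝕏, 𝕌 be compact metric spaces and N ≥ 1. The multifunction μ ↦ Û(μ) := { (1/N)∑_{i=1}^N δ_{(x^i,u^i)} : (1/N)∑_{i=1}^N δ_{x^i} = μ } from the set of N-point empirical measures on 𝕏 to subsets of 𝒫(𝕏 × 𝕌) is upper semicontinuous: if μ_k → μ weakly with each μ_k an N-point empirical measure, and θ_k ∈ Û(μ_k) for each k, then some subsequence of (θ_k) converges weakly to an element of Û(μ). -/
open MeasureTheory Finset Filter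
open scoped ENNReal

/-- The `N`-point empirical (probability) measure of a tuple `x : Fin N → α`. -/
noncomputable def empirical {α : Type*} [MeasurableSpace α] {N : ℕ} [NeZero N]
    (x : Fin N → α) : ProbabilityMeasure α :=
  ⟨((N : ℝ≥0∞))⁻¹ • ∑ i : Fin N, Measure.dirac (x i), by
    constructor
    simp [Measure.smul_apply, Measure.finset_sum_apply, smul_eq_mul,
      ENNReal.inv_mul_cancel, NeZero.ne]⟩

/-- The constraint set `Û(μ)`: joint `N`-point empirical measures on `𝕏 × 𝕌` whose
`𝕏`-empirical measure equals `μ`. -/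
def actionSet {𝕏 𝕌 : Type*} [MeasurableSpace 𝕏] [MeasurableSpace 𝕌]
    (N : ℕ) [NeZero N] (μ : ProbabilityMeasure 𝕏) : Set (ProbabilityMeasure (𝕏 × 𝕌)) :=
  {θ | ∃ (x : Fin N → 𝕏) (u : Fin N → 𝕌),
    empirical (fun i => (x i, u i)) = θ ∧ empirical x = μ}

/-!
The atoms `(x_k^i, u_k^i)` of `θ_k` form a sequence in the compact space `(𝕏 × 𝕌)^N`, so a
subsequence converges to some tuple `q`. Since a tuple's empirical measure depends continuously on
the tuple, `θ_k` converges to `empirical q` along it, and the `𝕏`-part of `q` has empirical measure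
`lim μ_k = μ` by uniqueness of weak limits.
-/

open Topology BoundedContinuousFunction

section Empirical

variable {α : Type*} [TopologicalSpace α] [MeasurableSpace α] [OpensMeasurableSpace α]
  {N : ℕ} [NeZero N]

lemma integral_empirical (x : Fin N → α) (f : α →ᵇ ℝ) :
    ∫ a, f a ∂(empirical x : Measure α) = (N : ℝ)⁻¹ * ∑ i, f (x i) := by
  change ∫ a, f a ∂((N : ℝ≥0∞)⁻¹ • ∑ i, Measure.dirac (x i)) = _
  rw [integral_smul_measure, integral_finsetSum_measure fun i _ => f.integrable _]
  simp [integral_dirac' _ _ f.continuous.measurable.stronglyMeasurable, ENNReal.toReal_inv]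

lemma continuous_empirical : Continuous (empirical : (Fin N → α) → ProbabilityMeasure α) :=
  ProbabilityMeasure.continuous_iff_forall_continuous_integral.2 fun f => by
    simp only [integral_empirical]
    exact continuous_const.mul
      (continuous_finsetSum _ fun i _ => f.continuous.comp (continuous_apply i))

end Empirical

lemma empirical_mem_actionSet_of_tendsto {𝕏 𝕌 : Type*}
    [TopologicalSpace 𝕏] [HasOuterApproxClosed 𝕏] [MeasurableSpace 𝕏] [BorelSpace 𝕏]
    [TopologicalSpace 𝕌] [MeasurableSpace 𝕌] {N : ℕ} [NeZero N]
    {p : ℕ → Fin N → 𝕏 × 𝕌} {q : Fin N → 𝕏 × 𝕌} {μ : ProbabilityMeasure 𝕏}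
    (hpq : Tendsto p atTop (𝓝 q))
    (hμ : Tendsto (fun k => empirical (Prod.fst ∘ p k)) atTop (𝓝 μ)) :
    empirical q ∈ actionSet N μ := by
  have hfst : Tendsto (fun k => Prod.fst ∘ p k) atTop (𝓝 (Prod.fst ∘ q)) :=
    ((continuous_pi fun i => continuous_fst.comp (continuous_apply i)).tendsto q).comp hpq
  exact ⟨Prod.fst ∘ q, Prod.snd ∘ q, rfl,
    tendsto_nhds_unique ((continuous_empirical.tendsto _).comp hfst) hμ⟩

theorem actionSet_upper_semicontinuous_general {𝕏 𝕌 : Type*}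
    [MetricSpace 𝕏] [CompactSpace 𝕏] [MeasurableSpace 𝕏] [BorelSpace 𝕏]
    [MetricSpace 𝕌] [CompactSpace 𝕌] [MeasurableSpace 𝕌] [BorelSpace 𝕌]
    (N : ℕ) [NeZero N]
    (μseq : ℕ → ProbabilityMeasure 𝕏) (μ : ProbabilityMeasure 𝕏)
    (hconv : Tendsto μseq atTop (nhds μ))
    (θ : ℕ → ProbabilityMeasure (𝕏 × 𝕌)) (hθ : ∀ k, θ k ∈ actionSet N (μseq k)) :
    ∃ (φ : ℕ → ℕ) (θ₀ : ProbabilityMeasure (𝕏 × 𝕌)), StrictMono φ ∧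
      θ₀ ∈ actionSet N μ ∧ Tendsto (fun k => θ (φ k)) atTop (nhds θ₀) := by
  choose x u hxu hx using hθ
  obtain ⟨q, φ, hφ, hq⟩ :=
    SeqCompactSpace.tendsto_subseq fun k (i : Fin N) => (x k i, u k i)
  refine ⟨φ, empirical q, hφ, empirical_mem_actionSet_of_tendsto hq ?_, ?_⟩
  · exact (hconv.comp hφ.tendsto_atTop).congr fun k => (hx (φ k)).symm
  · exact ((continuous_empirical.tendsto q).comp hq).congr fun k => hxu (φ k)

/-- the multifunction `μ ↦ Û(μ)` is upper semicontinuous on `N`-point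
empirical measures: if `μ_k → μ` weakly with every `μ_k` (and `μ`) an `N`-point empirical
measure and `θ_k ∈ Û(μ_k)`, then some subsequence of `(θ_k)` converges weakly to an element
of `Û(μ)`. -/
theorem actionSet_upper_semicontinuous {𝕏 𝕌 : Type*}
    [MetricSpace 𝕏] [CompactSpace 𝕏] [MeasurableSpace 𝕏] [BorelSpace 𝕏]
    [MetricSpace 𝕌] [CompactSpace 𝕌] [MeasurableSpace 𝕌] [BorelSpace 𝕌]
    (N : ℕ) [NeZero N]
    (μseq : ℕ → ProbabilityMeasure 𝕏) (μ : ProbabilityMeasure 𝕏)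
    (hemp : ∀ k, ∃ x : Fin N → 𝕏, empirical x = μseq k)
    (hμ : ∃ x : Fin N → 𝕏, empirical x = μ)
    (hconv : Tendsto μseq atTop (nhds μ))
    (θ : ℕ → ProbabilityMeasure (𝕏 × 𝕌)) (hθ : ∀ k, θ k ∈ actionSet N (μseq k)) :
    ∃ (φ : ℕ → ℕ) (θ₀ : ProbabilityMeasure (𝕏 × 𝕌)), StrictMono φ ∧
      θ₀ ∈ actionSet N μ ∧ Tendsto (fun k => θ (φ k)) atTop (nhds θ₀) :=
  actionSet_upper_semicontinuous_general N μseq μ hconv θ hθ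
end

section
/- Let 𝕏, 𝕌 be compact metric spaces, let 𝒫(𝕏)^M denote M-tuples of probability measures, and let 𝒯 : 𝕏 × 𝕌 × 𝒫(𝕏)^M → 𝒫(𝕏) be jointly continuous (with weak topologies on measure spaces). Define F(μ^{1:M}, θ)(A) := ∫_{𝕏×𝕌} 𝒯(A | x, u, μ^{1:M}) θ(dx × du) for θ ∈ 𝒫(𝕏 × 𝕌). Then F : 𝒫(𝕏)^M × 𝒫(𝕏 × 𝕌) → 𝒫(𝕏) is jointly continuous. -/
open MeasureTheory Filter Topology
open scoped BoundedContinuousFunction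

/-!
Over the compact space `𝕏 × 𝕌` the integrand `(x, u) ↦ ∫ f d𝒯(·|x, u, μ^{1:M})` depends continuously
on `μ^{1:M}` in the sup norm, since a jointly continuous function on `P × K` with `K` compact
curries to a continuous map into `C(K)`. The pairing `(g, θ) ↦ ∫ g dθ` is jointly continuous for
the sup norm on `g` and the weak topology on `θ`, because `|∫ g dθ - ∫ g₀ dθ| ≤ ‖g - g₀‖`.
-/

theorem ContinuousMap.continuous_mkOfCompact_curry {P K : Type*} [TopologicalSpace P]
    [TopologicalSpace K] [CompactSpace K] (G : C(P × K, ℝ)) :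
    Continuous fun ν => BoundedContinuousFunction.mkOfCompact (G.curry ν) :=
  (ContinuousMap.isometryEquivBoundedOfCompact K ℝ).continuous.comp G.curry.continuous

theorem MeasureTheory.ProbabilityMeasure.tendsto_integral_of_tendsto_of_tendsto {X ι : Type*}
    [TopologicalSpace X] [MeasurableSpace X] [OpensMeasurableSpace X] {l : Filter ι}
    {g : ι → X →ᵇ ℝ} {g₀ : X →ᵇ ℝ} {θ : ι → ProbabilityMeasure X} {θ₀ : ProbabilityMeasure X}
    (hg : Tendsto g l (𝓝 g₀)) (hθ : Tendsto θ l (𝓝 θ₀)) :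
    Tendsto (fun i => ∫ x, g i x ∂(θ i : Measure X)) l (𝓝 (∫ x, g₀ x ∂(θ₀ : Measure X))) := by
  have h_fixed : Tendsto (fun i => ∫ x, g₀ x ∂(θ i : Measure X)) l
      (𝓝 (∫ x, g₀ x ∂(θ₀ : Measure X))) :=
    ProbabilityMeasure.tendsto_iff_forall_integral_tendsto.mp hθ g₀
  have h_diff : Tendsto (fun i => ∫ x, g i x ∂(θ i : Measure X) - ∫ x, g₀ x ∂(θ i : Measure X))
      l (𝓝 0) := by
    refine squeeze_zero_norm (fun i => ?_) (tendsto_iff_norm_sub_tendsto_zero.mp hg)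
    rw [← integral_sub ((g i).integrable _) (g₀.integrable _)]
    exact (g i - g₀).norm_integral_le_norm _
  simpa using h_diff.add h_fixed

/-- for compact metric `𝕏, 𝕌` and a jointly (weakly) continuous kernel
`𝒯 : 𝕏 × 𝕌 × 𝒫(𝕏)^M → 𝒫(𝕏)`, the map `F(μ^{1:M}, θ) = ∫ 𝒯(·|x,u,μ^{1:M}) θ(dx du)` is jointly
continuous: along any weakly convergent sequences `(μ^{1:M}_n, θ_n) → (μ^{1:M}, θ)`, the
measures `F(μ^{1:M}_n, θ_n)` converge weakly to `F(μ^{1:M}, θ)` (tested against all bounded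
continuous functions). -/
theorem meanField_transition_jointly_continuous {𝕏 𝕌 : Type*}
    [MetricSpace 𝕏] [CompactSpace 𝕏] [MeasurableSpace 𝕏] [BorelSpace 𝕏]
    [MetricSpace 𝕌] [CompactSpace 𝕌] [MeasurableSpace 𝕌] [BorelSpace 𝕌] {M : ℕ}
    (T : 𝕏 → 𝕌 → (Fin M → ProbabilityMeasure 𝕏) → ProbabilityMeasure 𝕏)
    (hT : Continuous (fun q : 𝕏 × 𝕌 × (Fin M → ProbabilityMeasure 𝕏) =>
      T q.1 q.2.1 q.2.2))
    (μs : ℕ → Fin M → ProbabilityMeasure 𝕏) (μs₀ : Fin M → ProbabilityMeasure 𝕏)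
    (hμ : Tendsto μs atTop (nhds μs₀))
    (θ : ℕ → ProbabilityMeasure (𝕏 × 𝕌)) (θ₀ : ProbabilityMeasure (𝕏 × 𝕌))
    (hθ : Tendsto θ atTop (nhds θ₀)) :
    ∀ f : BoundedContinuousFunction 𝕏 ℝ,
      Tendsto
        (fun n => ∫ p : 𝕏 × 𝕌,
            (∫ y, f y ∂(T p.1 p.2 (μs n) : Measure 𝕏)) ∂(θ n : Measure (𝕏 × 𝕌)))
        atTop
        (nhds (∫ p : 𝕏 × 𝕌,
            (∫ y, f y ∂(T p.1 p.2 μs₀ : Measure 𝕏)) ∂(θ₀ : Measure (𝕏 × 𝕌)))) := by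
  intro f
  have hG : Continuous fun q : (Fin M → ProbabilityMeasure 𝕏) × (𝕏 × 𝕌) =>
      ∫ y, f y ∂(T q.2.1 q.2.2 q.1 : Measure 𝕏) :=
    (ProbabilityMeasure.continuous_integral_boundedContinuousFunction f).comp
      (hT.comp (continuous_snd.fst.prodMk (continuous_snd.snd.prodMk continuous_fst)))
  have h_integrand := (ContinuousMap.continuous_mkOfCompact_curry ⟨_, hG⟩).tendsto μs₀ |>.comp hμ
  exact ProbabilityMeasure.tendsto_integral_of_tendsto_of_tendsto h_integrand hθ
end
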